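/- For integers n ≥ 1 and k ≥ 2, M_k^n ≤ min{ n/(n+1), (1 + log(kn))/k }, where M_k^n is the supremum of π(F) over families F of n ships of size k in ℤ. -/

import Mathlib

/-- A shooting pattern `X` hits a ship `S` if every translate of `S` intersects `X`. -/
def Hits (X S : Set ℤ) : Prop := ∀ n : ℤ, ∃ s ∈ S, n + s ∈ X

/-- Lower asymptotic density of a set of integers. -/
noncomputable def lowerDensity (X : Set ℤ) : ℝ :=
  Filter.liminf (fun N : ℕ =>
    ((X ∩ Set.Icc (-(N:ℤ)) (N:ℤ)).ncard : ℝ) / (2 * N + 1)) Filter.atTop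

/-- Optimal piercing density of a family of ships. -/
noncomputable def piercing (F : Set (Set ℤ)) : ℝ :=
  sInf (lowerDensity '' {X | ∀ S ∈ F, Hits X S})

/-!
Both bounds come from periodic patterns `{x | (x : ZMod p) ∈ R}`, whose density is `#R / p`; a
period larger than the diameters of the ships lets every translate be read off in `ZMod p`.

For `n / (n + 1)`, pick in each ship two points at distance `d i > 0`. A greedy scan of `[0, L)`
yields holes `H` with no two at a distance `d i`, where every skipped point is blocked by a hole and
one of the `n` distances, so `L ≤ (n + 1) * #H`. Shooting everywhere except at `H`, with period
`L + W` for a bound `W` on the diameters, hits every translate of every ship.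

For `(1 + log (k n)) / k`, the `n p` translates of the ships in `ZMod p` are `k`-sets; choosing
`t ≈ (p / k) log (k n)` points one by one, each hitting at least a `k / p` fraction of the
translates not yet hit, leaves at most `n p (1 - k / p) ^ t ≤ p / k` of them, which are then
hit one point each.
-/

open Filter Topology Finset Fintype

lemma ncard_inter_Icc_le (X : Set ℤ) (N : ℕ) :
    (X ∩ Set.Icc (-(N:ℤ)) N).ncard ≤ 2 * N + 1 := by
  calc (X ∩ Set.Icc (-(N:ℤ)) N).ncard ≤ (Set.Icc (-(N:ℤ)) N).ncard :=
        Set.ncard_le_ncard Set.inter_subset_right (Set.finite_Icc _ _)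
    _ = 2 * N + 1 := by rw [← coe_Icc, Set.ncard_coe_finset, Int.card_Icc]; omega

lemma lowerDensity_nonneg (X : Set ℤ) : 0 ≤ lowerDensity X := by
  have hle : ∀ N : ℕ, ((X ∩ Set.Icc (-(N:ℤ)) N).ncard : ℝ) / (2 * N + 1) ≤ 1 := fun N => by
    rw [div_le_one (by positivity)]
    exact_mod_cast ncard_inter_Icc_le X N
  exact le_liminf_of_le (isBoundedUnder_of ⟨1, hle⟩).isCoboundedUnder_ge
    (Eventually.of_forall fun N => by positivity)

lemma lowerDensity_le_of_ncard_le {X : Set ℤ} {c C : ℝ}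
    (h : ∀ N : ℕ, ((X ∩ Set.Icc (-(N:ℤ)) N).ncard : ℝ) ≤ c * (2 * N + 1) + C) :
    lowerDensity X ≤ c := by
  have hlim : Tendsto (fun N : ℕ => c + C / (2 * N + 1)) atTop (𝓝 c) := by
    have h2N : Tendsto (fun N : ℕ => 2 * (N : ℝ) + 1) atTop atTop :=
      tendsto_atTop_add_const_right _ _ (tendsto_natCast_atTop_atTop.const_mul_atTop two_pos)
    simpa using tendsto_const_nhds.add (tendsto_const_nhds.div_atTop h2N)
  refine (liminf_le_liminf (Eventually.of_forall fun N => ?_)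
    (isBoundedUnder_of ⟨0, fun N => by positivity⟩)
    hlim.isBoundedUnder_le.isCoboundedUnder_ge).trans hlim.liminf_eq.le
  rw [div_le_iff₀ (by positivity), add_mul, div_mul_cancel₀ _ (by positivity)]
  exact h N

lemma piercing_le_lowerDensity {F : Set (Set ℤ)} {X : Set ℤ} (hX : ∀ S ∈ F, Hits X S) :
    piercing F ≤ lowerDensity X :=
  csInf_le ⟨0, by rintro _ ⟨Y, -, rfl⟩; exact lowerDensity_nonneg Y⟩ ⟨X, hX, rfl⟩

lemma le_of_eventually_le_add_div {a b C : ℝ} (h : ∀ᶠ p : ℕ in atTop, a ≤ b + C / p) : a ≤ b :=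
  ge_of_tendsto (by simpa using tendsto_const_nhds.add (tendsto_const_div_atTop_nhds_zero_nat C)) h

lemma card_Icc_ediv_le (p : ℕ) [NeZero p] (N : ℕ) :
    (#(Icc ((-N : ℤ) / p) ((N : ℤ) / p)) : ℝ) ≤ (2 * N + 1) / p + 2 := by
  have hp : (0 : ℤ) < p := by have := NeZero.pos p; omega
  set m := (N : ℤ) / p + 1 - (-N : ℤ) / p
  have hm : 0 ≤ m := by have := Int.ediv_le_ediv hp (show (-N : ℤ) ≤ N by omega); omega
  have hpm : (p : ℤ) * m ≤ 2 * N + 1 + 2 * p := by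
    have := Int.mul_ediv_self_le (x := (N : ℤ)) hp.ne'
    have := Int.lt_mul_ediv_self_add (x := (-N : ℤ)) hp
    simp only [m]; linarith
  have hp' : (0 : ℝ) < p := by exact_mod_cast hp
  rw [Int.card_Icc, ← Int.cast_natCast, Int.toNat_of_nonneg hm, div_add' _ _ _ hp'.ne',
    le_div_iff₀ hp']
  exact_mod_cast (by linarith : m * p ≤ 2 * N + 1 + 2 * p)

lemma eq_of_intCast_eq_of_abs_sub_lt {p : ℕ} {x y : ℤ} (h : (x : ZMod p) = y) (hxy : |x - y| < p) :
    x = y :=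
  sub_eq_zero.mp <|
    Int.eq_zero_of_abs_lt_dvd ((ZMod.intCast_eq_intCast_iff_dvd_sub _ _ _).mp h.symm) hxy

section Periodic

variable {p : ℕ} [NeZero p]

lemma ncard_intCast_mem_inter_Icc_le (R : Finset (ZMod p)) (N : ℕ) :
    (({x : ℤ | (x : ZMod p) ∈ R} ∩ Set.Icc (-(N:ℤ)) N).ncard : ℝ) ≤
      #R / p * (2 * N + 1) + 2 * #R := by
  have hp : (0 : ℤ) < p := by have := NeZero.pos p; omega
  have hinj : ({x : ℤ | (x : ZMod p) ∈ R} ∩ Set.Icc (-(N:ℤ)) N).ncard ≤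
      #(R ×ˢ Icc ((-N : ℤ) / p) ((N : ℤ) / p)) := by
    rw [← Set.ncard_coe_finset]
    refine Set.ncard_le_ncard_of_injOn (fun x => ((x : ZMod p), x / p)) ?_ ?_
    · rintro x ⟨hxR, hxN, hxN'⟩
      simp only [coe_product, Set.mem_prod, mem_coe, mem_Icc]
      exact ⟨hxR, Int.ediv_le_ediv hp hxN, Int.ediv_le_ediv hp hxN'⟩
    · intro x _ y _ hxy
      simp only [Prod.mk.injEq, ZMod.intCast_eq_intCast_iff'] at hxy
      rw [← Int.emod_add_mul_ediv x p, ← Int.emod_add_mul_ediv y p, hxy.1, hxy.2]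
  calc (({x : ℤ | (x : ZMod p) ∈ R} ∩ Set.Icc (-(N:ℤ)) N).ncard : ℝ)
      ≤ #R * #(Icc ((-N : ℤ) / p) ((N : ℤ) / p)) := by
        rw [card_product] at hinj; exact_mod_cast hinj
    _ ≤ #R * ((2 * N + 1) / p + 2) := by gcongr; exact card_Icc_ediv_le p N
    _ = #R / p * (2 * N + 1) + 2 * #R := by ring

lemma piercing_le_card_div_of_forall_add_mem {F : Set (Set ℤ)} (R : Finset (ZMod p))
    (hR : ∀ S ∈ F, ∀ j : ZMod p, ∃ s ∈ S, j + s ∈ R) : piercing F ≤ #R / p := by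
  refine (piercing_le_lowerDensity (X := {x : ℤ | (x : ZMod p) ∈ R}) fun S hS m => ?_).trans
    (lowerDensity_le_of_ncard_le (ncard_intCast_mem_inter_Icc_le R))
  obtain ⟨s, hs, hsR⟩ := hR S hS m
  exact ⟨s, hs, by simpa using hsR⟩

end Periodic

lemma exists_subset_range_add_notMem_covering (D : Finset ℕ) (hD : 0 ∉ D) (L : ℕ) :
    ∃ H ⊆ range L, (∀ x ∈ H, ∀ d ∈ D, x + d ∉ H) ∧
      range L ⊆ H ∪ (H ×ˢ D).image (fun q => q.1 + q.2) := by
  induction L with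
  | zero => exact ⟨∅, by simp⟩
  | succ L ih =>
    obtain ⟨H, hHL, hfree, hcover⟩ := ih
    by_cases hblocked : ∃ x ∈ H, ∃ d ∈ D, x + d = L
    · refine ⟨H, hHL.trans (range_subset_range.mpr L.le_succ), hfree, fun y hy => ?_⟩
      rcases (mem_range_succ_iff.mp hy).lt_or_eq with hy | rfl
      · exact hcover (mem_range.mpr hy)
      · obtain ⟨x, hx, d, hd, rfl⟩ := hblocked
        exact mem_union_right _ (mem_image.mpr ⟨(x, d), mem_product.mpr ⟨hx, hd⟩, rfl⟩)
    · push Not at hblocked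
      refine ⟨insert L H, ?_, ?_, ?_⟩
      · rw [range_add_one]; exact insert_subset_insert _ hHL
      · have hlt : ∀ y ∈ H, y < L := fun y hy => mem_range.mp (hHL hy)
        intro x hx d hd hxd
        have hd0 : 0 < d := Nat.pos_of_ne_zero fun h => hD (h ▸ hd)
        rcases mem_insert.mp hx with rfl | hx <;> rcases mem_insert.mp hxd with h | h
        · omega
        · exact absurd (hlt _ h) (by omega)
        · exact hblocked x hx d hd h
        · exact hfree x hx d hd h
      · rw [range_add_one]
        refine insert_subset (mem_union_left _ (mem_insert_self _ _)) (hcover.trans ?_)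
        refine union_subset_union (subset_insert _ _) (image_subset_image ?_)
        exact product_subset_product (subset_insert _ _) subset_rfl

lemma exists_subset_range_add_notMem (D : Finset ℕ) (hD : 0 ∉ D) (L : ℕ) :
    ∃ H ⊆ range L, (∀ x ∈ H, ∀ d ∈ D, x + d ∉ H) ∧ L ≤ (#D + 1) * #H := by
  obtain ⟨H, hHL, hfree, hcover⟩ := exists_subset_range_add_notMem_covering D hD L
  refine ⟨H, hHL, hfree, ?_⟩
  calc L = #(range L) := (card_range L).symm
    _ ≤ #H + #((H ×ˢ D).image fun q => q.1 + q.2) := (card_le_card hcover).trans (card_union_le _ _)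
    _ ≤ #H + #H * #D := by grw [card_image_le, card_product]
    _ = (#D + 1) * #H := by ring

lemma exists_card_le_forall_not_disjoint {α β : Type*} [Nonempty β] [DecidableEq β]
    (M : Finset α) (A : α → Finset β) (hA : ∀ j ∈ M, (A j).Nonempty) :
    ∃ S : Finset β, #S ≤ #M ∧ ∀ j ∈ M, ¬Disjoint (A j) S :=
  ⟨M.image fun j => Classical.epsilon (· ∈ A j), card_image_le, fun j hj =>
    not_disjoint_iff.mpr ⟨_, Classical.epsilon_spec (hA j hj), mem_image_of_mem _ hj⟩⟩

section Transversal

variable {α β : Type*} [Fintype β] [Nonempty β] [DecidableEq β] {k : ℕ}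

lemma exists_mul_card_le_card_filter_mem (M : Finset α) (A : α → Finset β)
    (hA : ∀ j ∈ M, k ≤ #(A j)) : ∃ u, k * #M ≤ card β * #{j ∈ M | u ∈ A j} := by
  have hdouble : ∑ u, #{j ∈ M | u ∈ A j} = ∑ j ∈ M, #(A j) := by
    simpa [bipartiteAbove, bipartiteBelow, filter_mem_eq_inter] using
      sum_card_bipartiteAbove_eq_sum_card_bipartiteBelow (s := univ) (t := M) (fun u j => u ∈ A j)
  obtain ⟨u, -, hu⟩ := exists_le_of_sum_le (f := fun _ => k * #M)
    (g := fun u => card β * #{j ∈ M | u ∈ A j}) univ_nonempty <| by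
      rw [sum_const, card_univ, smul_eq_mul, ← mul_sum, hdouble]
      gcongr
      simpa [mul_comm] using card_nsmul_le_sum M _ k hA
  exact ⟨u, hu⟩

lemma exists_card_le_and_card_filter_disjoint_le (J : Finset α) (A : α → Finset β)
    (hA : ∀ j ∈ J, k ≤ #(A j)) (t : ℕ) :
    ∃ R : Finset β, #R ≤ t ∧ card β ^ t * #{j ∈ J | Disjoint (A j) R} ≤ (card β - k) ^ t * #J := by
  induction t with
  | zero => exact ⟨∅, by simp, by simp⟩
  | succ t ih =>
    obtain ⟨R, hRt, hmissed⟩ := ih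
    set M := {j ∈ J | Disjoint (A j) R}
    obtain ⟨u, hu⟩ := exists_mul_card_le_card_filter_mem M A fun j hj => hA j (mem_filter.mp hj).1
    have hnew : {j ∈ J | Disjoint (A j) (insert u R)} = {j ∈ M | u ∉ A j} := by
      ext j; simp only [M, mem_filter, disjoint_insert_right]; tauto
    have hsplit := card_filter_add_card_filter_not (s := M) (fun j => u ∈ A j)
    have hstep : card β * #{j ∈ M | u ∉ A j} ≤ (card β - k) * #M := by
      rw [Nat.sub_mul]
      refine Nat.le_sub_of_add_le ?_
      calc card β * #{j ∈ M | u ∉ A j} + k * #M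
          ≤ card β * #{j ∈ M | u ∉ A j} + card β * #{j ∈ M | u ∈ A j} := by gcongr
        _ = card β * #M := by rw [← hsplit, mul_add, add_comm]
    refine ⟨insert u R, (card_insert_le _ _).trans (by omega), ?_⟩
    calc card β ^ (t + 1) * #{j ∈ J | Disjoint (A j) (insert u R)}
        = card β ^ t * (card β * #{j ∈ M | u ∉ A j}) := by rw [hnew, pow_succ, mul_assoc]
      _ ≤ card β ^ t * ((card β - k) * #M) := by gcongr
      _ = (card β - k) * (card β ^ t * #M) := by ring
      _ ≤ (card β - k) * ((card β - k) ^ t * #J) := by gcongr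
      _ = (card β - k) ^ (t + 1) * #J := by ring

lemma exists_transversal_card_le (J : Finset α) (A : α → Finset β) (hk : 0 < k)
    (hA : ∀ j ∈ J, k ≤ #(A j)) (t : ℕ) :
    ∃ R : Finset β, (∀ j ∈ J, ¬Disjoint (A j) R) ∧ (#R : ℝ) ≤ t + #J * (1 - k / card β) ^ t := by
  obtain ⟨R, hRt, hmissed⟩ := exists_card_le_and_card_filter_disjoint_le J A hA t
  set M := {j ∈ J | Disjoint (A j) R}
  obtain ⟨S, hSM, hS⟩ := exists_card_le_forall_not_disjoint M A fun j hj =>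
    card_pos.mp (hk.trans_le (hA j (mem_filter.mp hj).1))
  refine ⟨R ∪ S, fun j hj hdisj => ?_, ?_⟩
  · rw [disjoint_union_right] at hdisj
    exact hS j (mem_filter.mpr ⟨hj, hdisj.1⟩) hdisj.2
  have hM : (#M : ℝ) ≤ #J * (1 - k / card β) ^ t := by
    rcases J.eq_empty_or_nonempty with rfl | ⟨j, hj⟩
    · simp [M]
    have hkβ : k ≤ card β := (hA j hj).trans (card_le_univ _)
    have hβ : (0 : ℝ) < card β := by exact_mod_cast Fintype.card_pos
    have hmissed' : (card β : ℝ) ^ t * #M ≤ (card β - k) ^ t * #J := by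
      have := (Nat.cast_le (α := ℝ)).mpr hmissed
      push_cast [Nat.cast_sub hkβ] at this
      exact this
    rw [one_sub_div hβ.ne', div_pow, ← mul_div_assoc, le_div_iff₀ (by positivity)]
    linarith
  calc (#(R ∪ S) : ℝ) ≤ #R + #S := by exact_mod_cast card_union_le R S
    _ ≤ t + #J * (1 - k / card β) ^ t := by
      have : (#R : ℝ) ≤ t := by exact_mod_cast hRt
      have : (#S : ℝ) ≤ #M := by exact_mod_cast hSM
      linarith

end Transversal

lemma mul_one_sub_div_pow_le_div {k n p t : ℕ} (hk : 0 < k) (hkp : k ≤ p) (hn : 0 < n)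
    (ht : p / k * Real.log (k * n) ≤ t) : (n * p : ℝ) * (1 - k / p) ^ t ≤ p / k := by
  have hk' : (0 : ℝ) < k := by exact_mod_cast hk
  have hp' : (0 : ℝ) < p := by exact_mod_cast hk.trans_le hkp
  have hkn : (0 : ℝ) < k * n := by positivity
  have hpow : (1 - k / p : ℝ) ^ t ≤ 1 / (k * n) := calc
    (1 - k / p : ℝ) ^ t ≤ Real.exp (-(k / p)) ^ t := by
      gcongr
      · rw [sub_nonneg, div_le_one hp']; exact_mod_cast hkp
      · exact Real.one_sub_le_exp_neg _
    _ = Real.exp (-(k / p * t)) := by rw [← Real.exp_nat_mul]; ring_nf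
    _ ≤ Real.exp (-Real.log (k * n)) := by
      gcongr
      calc Real.log (k * n) = k / p * (p / k * Real.log (k * n)) := by field_simp
        _ ≤ k / p * t := by gcongr
    _ = 1 / (k * n) := by rw [Real.exp_neg, Real.exp_log hkn, one_div]
  calc (n * p : ℝ) * (1 - k / p) ^ t ≤ n * p * (1 / (k * n)) := by gcongr
    _ = p / k := by field_simp

section Ships

variable {ι : Type*} [Fintype ι]

lemma exists_forall_abs_sub_le (T : ι → Finset ℤ) :
    ∃ W : ℕ, ∀ i, ∀ s ∈ T i, ∀ s' ∈ T i, |s - s'| ≤ W := by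
  classical
  refine ⟨2 * (univ.biUnion T).sup Int.natAbs, fun i s hs s' hs' => ?_⟩
  have h := le_sup (f := Int.natAbs) (mem_biUnion.mpr ⟨i, mem_univ _, hs⟩)
  have h' := le_sup (f := Int.natAbs) (mem_biUnion.mpr ⟨i, mem_univ _, hs'⟩)
  rw [abs_le]
  push_cast
  constructor <;> omega

theorem piercing_le_one_add_log_div [Nonempty ι] (T : ι → Finset ℤ) {k : ℕ} (hk : 0 < k)
    (hT : ∀ i, k ≤ #(T i)) :
    piercing (Set.range fun i => (T i : Set ℤ)) ≤ (1 + Real.log (k * card ι)) / k := by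
  obtain ⟨W, hW⟩ := exists_forall_abs_sub_le T
  refine le_of_eventually_le_add_div (C := 1) ((eventually_gt_atTop W).mono fun p hWp => ?_)
  have : NeZero p := ⟨by omega⟩
  let A : ι × ZMod p → Finset (ZMod p) := fun q => (T q.1).image fun s : ℤ => q.2 + (s : ZMod p)
  have hA : ∀ q ∈ univ, k ≤ #(A q) := fun q _ => by
    rw [card_image_of_injOn fun s hs s' hs' h => eq_of_intCast_eq_of_abs_sub_lt
      (add_left_cancel h) ((hW _ s hs s' hs').trans_lt (by exact_mod_cast hWp))]
    exact hT q.1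
  set t := ⌈(p / k : ℝ) * Real.log (k * card ι)⌉₊
  obtain ⟨R, hR, hRcard⟩ := exists_transversal_card_le univ A hk hA t
  refine (piercing_le_card_div_of_forall_add_mem R ?_).trans ?_
  · rintro _ ⟨i, rfl⟩ j
    obtain ⟨x, hxA, hxR⟩ := not_disjoint_iff.mp (hR (i, j) (mem_univ _))
    obtain ⟨s, hs, rfl⟩ := mem_image.mp hxA
    exact ⟨s, hs, hxR⟩
  obtain ⟨i⟩ := ‹Nonempty ι›
  have hkp : k ≤ p := by simpa using (hA (i, 0) (mem_univ _)).trans (card_le_univ _)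
  have hmissed := mul_one_sub_div_pow_le_div hk hkp (Fintype.card_pos (α := ι)) (Nat.le_ceil _)
  have hlog : 0 ≤ Real.log (k * card ι) := by
    simpa using Real.log_natCast_nonneg (k * card ι)
  have ht : (t : ℝ) < p / k * Real.log (k * card ι) + 1 :=
    Nat.ceil_lt_add_one (by positivity)
  simp only [card_univ, card_prod, ZMod.card, Nat.cast_mul] at hRcard
  have hp : (0 : ℝ) < p := by exact_mod_cast NeZero.pos p
  rw [div_le_iff₀ hp]
  calc (#R : ℝ) ≤ p / k * Real.log (k * card ι) + 1 + p / k := by linarith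
    _ = ((1 + Real.log (k * card ι)) / k + 1 / p) * p := by field_simp; ring

lemma add_notMem_or_add_notMem_image_natCast {P W : ℕ} {H : Finset ℕ}
    (hHP : ∀ x ∈ H, x + W < P) {a b : ℤ} (hab : a < b) (hbaW : b - a ≤ W)
    (hfree : ∀ x ∈ H, x + (b - a).toNat ∉ H) (j : ZMod P) :
    j + a ∉ H.image Nat.cast ∨ j + b ∉ H.image Nat.cast := by
  by_contra! hmem
  obtain ⟨x, hx, hxj⟩ := mem_image.mp hmem.1
  obtain ⟨y, hy, hyj⟩ := mem_image.mp hmem.2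
  have hxy : (x : ℤ) + (b - a) = y := by
    refine eq_of_intCast_eq_of_abs_sub_lt (p := P) ?_ ?_
    · push_cast; rw [hxj, hyj]; ring
    · have := hHP x hx; have := hHP y hy
      rw [abs_lt]; constructor <;> omega
  exact hfree x hx (by convert hy using 1; omega)

lemma cast_sub_div_le_div_add_one_add_div {n P W h : ℕ} (hP : 0 < P) (hWP : W ≤ P) (hhP : h ≤ P)
    (hcover : P - W ≤ (n + 1) * h) : ((P - h : ℕ) : ℝ) / P ≤ n / (n + 1) + W / P := by
  have hP' : (0 : ℝ) < P := by exact_mod_cast hP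
  have hcover' : (P : ℝ) - W ≤ (n + 1) * h := by
    rw [← Nat.cast_sub hWP]; exact_mod_cast hcover
  have hnW : (0 : ℝ) ≤ n * W := by positivity
  rw [Nat.cast_sub hhP, div_add_div _ _ (by positivity) hP'.ne',
    div_le_div_iff₀ hP' (by positivity)]
  calc ((P : ℝ) - h) * ((n + 1) * P) = ((P - h) * (n + 1)) * P := by ring
    _ ≤ (n * P + (n + 1) * W) * P := by gcongr; linarith

theorem piercing_le_card_div_card_add_one (T : ι → Finset ℤ) (hT : ∀ i, 2 ≤ #(T i)) :
    piercing (Set.range fun i => (T i : Set ℤ)) ≤ card ι / (card ι + 1) := by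
  classical
  obtain ⟨W, hW⟩ := exists_forall_abs_sub_le T
  have hpair : ∀ i, ∃ a ∈ T i, ∃ b ∈ T i, a < b := fun i => by
    obtain ⟨a, ha, b, hb, hab⟩ := one_lt_card.mp (hT i)
    rcases hab.lt_or_gt with h | h
    exacts [⟨a, ha, b, hb, h⟩, ⟨b, hb, a, ha, h⟩]
  choose a ha b hb hab using hpair
  set D := univ.image fun i => (b i - a i).toNat
  have hD0 : 0 ∉ D := by
    simp only [D, mem_image, mem_univ, true_and, not_exists]
    intro i; have := hab i; omega
  refine le_of_eventually_le_add_div (C := W) ((eventually_gt_atTop W).mono fun P hWP => ?_)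
  have : NeZero P := ⟨by omega⟩
  obtain ⟨H, hHL, hfree, hcard⟩ := exists_subset_range_add_notMem D hD0 (P - W)
  have hHP : ∀ x ∈ H, x + W < P := fun x hx => by have := mem_range.mp (hHL hx); omega
  set R : Finset (ZMod P) := univ \ H.image Nat.cast
  refine (piercing_le_card_div_of_forall_add_mem R ?_).trans ?_
  · rintro _ ⟨i, rfl⟩ j
    have hba := (abs_le.mp (hW i _ (hb i) _ (ha i))).2
    rcases add_notMem_or_add_notMem_image_natCast hHP (hab i) hba
      (fun x hx => hfree x hx _ (mem_image_of_mem _ (mem_univ i))) j with h | h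
    exacts [⟨a i, ha i, by simpa [R] using h⟩, ⟨b i, hb i, by simpa [R] using h⟩]
  have hRcard : #R = P - #H := by
    rw [card_univ_sdiff, ZMod.card, card_image_of_injOn fun x hx y hy hxy => ?_]
    rwa [ZMod.natCast_eq_natCast_iff', Nat.mod_eq_of_lt (by linarith [hHP x hx]),
      Nat.mod_eq_of_lt (by linarith [hHP y hy])] at hxy
  rw [hRcard]
  refine cast_sub_div_le_div_add_one_add_div (NeZero.pos P) hWP.le
    ((card_le_card hHL).trans (by simp)) (hcard.trans ?_)
  gcongr
  exact card_image_le.trans_eq card_univ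

end Ships

theorem stmt11 (n k : ℕ) (hn : 1 ≤ n) (hk : 2 ≤ k) :
    sSup {x : ℝ | ∃ T : Fin n → Set ℤ, (∀ i, (T i).Finite ∧ (T i).ncard = k) ∧
        x = piercing {S | ∃ i, S = T i}} ≤
      min ((n : ℝ) / (n + 1)) ((1 + Real.log (k * n)) / k) := by
  have hlog : 0 ≤ Real.log (k * n) := by simpa using Real.log_natCast_nonneg (k * n)
  refine Real.sSup_le ?_ (le_min (by positivity) (div_nonneg (by linarith) (by positivity)))
  rintro _ ⟨T, hT, rfl⟩
  set T' : Fin n → Finset ℤ := fun i => (hT i).1.toFinset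
  have hF : {S | ∃ i, S = T i} = Set.range fun i => (T' i : Set ℤ) := by
    ext S; simp [T', eq_comm]
  have hcard : ∀ i, #(T' i) = k := fun i => by
    rw [← (hT i).2, Set.ncard_eq_toFinset_card _ (hT i).1]
  have : Nonempty (Fin n) := ⟨⟨0, hn⟩⟩
  rw [hF]
  refine le_min ?_ ?_
  · simpa using piercing_le_card_div_card_add_one T' fun i => hk.trans_eq (hcard i).symm
  · simpa using piercing_le_one_add_log_div T' (by omega) fun i => (hcard i).ge
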